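/- arXiv:1801.02183 — 4 statements merged into one kernel-verified Lean document; each statement's English description precedes it below -/
import Mathlib

section
/- Let G be a finite simple graph with Kirchhoff matrix L and heat kernel p_t(x,y) = (exp(tL))_{xy}. For vertices x, y with d(x,y) = k finite, the k-th derivative of t ↦ p_t(x,y) at t = 0 equals the number of walks of length k from x to y, and all lower-order derivatives at t = 0 vanish (for x ≠ y). -/
/-!
The `n`-th derivative of `t ↦ exp (t • L)` at `0` is `Lⁿ`, so the derivatives of the heat kernel
at `0` are the entries `(Lⁿ) x y`. Write `L = A - D` with `D` diagonal. Expanding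
`Lᵐ⁺¹ = Lᵐ A - Lᵐ D`, the diagonal term at `(x, z)` is `(Lᵐ) x z · D z z`, and by induction
`(Lᵐ) x z = (Aᵐ) x z = 0` whenever every walk from `x` to `z` is longer than `m`. Hence
`(Lⁿ) x y = (Aⁿ) x y` for `n ≤ d(x, y)`: the number of walks of length `n`, zero for
`n < d(x, y)`.
-/

open NormedSpace

section ExpDeriv

variable {𝕂 𝔸 F : Type*} [RCLike 𝕂] [NormedRing 𝔸] [NormedAlgebra 𝕂 𝔸] [CompleteSpace 𝔸]
  [NormedAddCommGroup F] [NormedSpace 𝕂 F]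

theorem iteratedDeriv_clm_exp_smul_const (φ : 𝔸 →L[𝕂] F) (a : 𝔸) (n : ℕ) :
    iteratedDeriv n (fun t : 𝕂 => φ (exp (t • a))) = fun t => φ (exp (t • a) * a ^ n) := by
  induction n with
  | zero => simp
  | succ n ih =>
    funext t
    rw [iteratedDeriv_succ, ih, pow_succ', ← mul_assoc]
    exact (φ.hasFDerivAt.comp_hasDerivAt t
      ((hasDerivAt_exp_smul_const a t).mul_const (a ^ n))).deriv

end ExpDeriv

section Matrix

attribute [local instance] Matrix.linftyOpNormedRing Matrix.linftyOpNormedAlgebra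

theorem Matrix.iteratedDeriv_exp_smul_apply_zero {𝕂 V : Type*} [RCLike 𝕂] [Fintype V]
    [DecidableEq V] (L : Matrix V V 𝕂) (x y : V) (n : ℕ) :
    iteratedDeriv n (fun t : 𝕂 => exp (t • L) x y) 0 = (L ^ n) x y := by
  have h := iteratedDeriv_clm_exp_smul_const
    (Matrix.entryLinearMap 𝕂 𝕂 x y).toContinuousLinearMap L n
  have h0 := congrFun h 0
  rw [zero_smul, exp_zero, one_mul] at h0
  exact h0

end Matrix

namespace SimpleGraph

variable {V : Type*} [Fintype V] [DecidableEq V] (G : SimpleGraph V) [DecidableRel G.Adj]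
  {R : Type*}

theorem adjMatrix_pow_apply_eq_zero [Semiring R] {m : ℕ} {x z : V}
    (h : ∀ p : G.Walk x z, m < p.length) : (G.adjMatrix R ^ m) x z = 0 := by
  have : IsEmpty {p : G.Walk x z | p.length = m} := ⟨fun p => (h p.1).ne' p.2⟩
  rw [adjMatrix_pow_apply_eq_card_walk, Fintype.card_eq_zero, Nat.cast_zero]

theorem adjMatrix_sub_diagonal_pow_apply [Ring R] (d : V → R) {m : ℕ} {x z : V}
    (h : ∀ p : G.Walk x z, m ≤ p.length) :
    ((G.adjMatrix R - Matrix.diagonal d) ^ m) x z = (G.adjMatrix R ^ m) x z := by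
  induction m generalizing z with
  | zero => simp
  | succ m ih =>
    have h_diag : ((G.adjMatrix R - Matrix.diagonal d) ^ m) x z = 0 := by
      rw [ih fun p => (h p).trans' m.le_succ]
      exact G.adjMatrix_pow_apply_eq_zero fun p => h p
    have h_adj : ∀ w ∈ G.neighborFinset z,
        ((G.adjMatrix R - Matrix.diagonal d) ^ m) x w = (G.adjMatrix R ^ m) x w := by
      intro w hw
      refine ih fun p => Nat.le_of_succ_le_succ ?_
      simpa using h (p.concat ((G.mem_neighborFinset z w).mp hw).symm)
    rw [pow_succ, pow_succ, Matrix.mul_sub, Matrix.sub_apply, Matrix.mul_diagonal, h_diag,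
      zero_mul, sub_zero, mul_adjMatrix_apply, mul_adjMatrix_apply]
    exact Finset.sum_congr rfl h_adj

end SimpleGraph

theorem heatKernel_iteratedDeriv_at_zero_general {V : Type*} [Fintype V] [DecidableEq V]
    (G : SimpleGraph V) [DecidableRel G.Adj]
    (L : Matrix V V ℝ)
    (hL : L = G.adjMatrix ℝ - Matrix.diagonal (fun v => (G.degree v : ℝ)))
    (x y : V)
    (k : ℕ) (hk : G.dist x y = k) :
    iteratedDeriv k (fun t : ℝ => (NormedSpace.exp (t • L)) x y) 0 =
      (Fintype.card {p : G.Walk x y // p.length = k} : ℝ) ∧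
    ∀ m < k, iteratedDeriv m (fun t : ℝ => (NormedSpace.exp (t • L)) x y) 0 = 0 := by
  have hk_le : ∀ p : G.Walk x y, k ≤ p.length := fun p => hk ▸ G.dist_le p
  refine ⟨?_, fun m hm => ?_⟩
  · rw [Matrix.iteratedDeriv_exp_smul_apply_zero, hL, G.adjMatrix_sub_diagonal_pow_apply _ hk_le,
      SimpleGraph.adjMatrix_pow_apply_eq_card_walk]
    rfl
  · rw [Matrix.iteratedDeriv_exp_smul_apply_zero, hL,
      G.adjMatrix_sub_diagonal_pow_apply _ fun p => hm.le.trans (hk_le p)]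
    exact G.adjMatrix_pow_apply_eq_zero fun p => hm.trans_le (hk_le p)

/-- The k-th derivative at t = 0 of the heat kernel t ↦ (exp(tL))_{xy}, with
k = d(x,y), equals the number of walks of length k from x to y, and all
lower-order derivatives vanish. -/
theorem heatKernel_iteratedDeriv_at_zero {V : Type*} [Fintype V] [DecidableEq V]
    (G : SimpleGraph V) [DecidableRel G.Adj]
    (L : Matrix V V ℝ)
    (hL : L = G.adjMatrix ℝ - Matrix.diagonal (fun v => (G.degree v : ℝ)))
    (x y : V) (hxy : x ≠ y) (h : G.Reachable x y)
    (k : ℕ) (hk : G.dist x y = k) :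
    iteratedDeriv k (fun t : ℝ => (NormedSpace.exp (t • L)) x y) 0 =
      (Fintype.card {p : G.Walk x y // p.length = k} : ℝ) ∧
    ∀ m < k, iteratedDeriv m (fun t : ℝ => (NormedSpace.exp (t • L)) x y) 0 = 0 :=
  heatKernel_iteratedDeriv_at_zero_general G L hL x y k hk
end

section
/- Let G be a finite simple graph with Kirchhoff matrix L, and let x ≠ y be vertices with d(x,y) = k finite. Then as t → 0⁺, p_t(x,y) = N · t^k / k! + O(t^{k+1}), where N is the number of walks of length k from x to y; more precisely, |p_t(x,y) − N t^k/k!| ≤ C t^{k+1} for all t ∈ (0,1] and some constant C. -/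
/-! Expanding `exp (t • L) = ∑ tⁿ Lⁿ / n!`, the entry `(Lⁿ) x y` counts the walks of length `n`
from `x` to `y` as long as `n ≤ d(x, y)`: a product of `n` entries of `L` that passes through a
diagonal entry, i.e. stays put for a step, cannot reach `y` in the remaining steps. Hence the
terms with `n < k` vanish, the term `n = k` is `N tᵏ / k!`, and the tail of the exponential
series is `O(tᵏ⁺¹)` uniformly on `(0, 1]`. -/

open Finset NormedSpace
open scoped Nat Matrix.Norms.Operator

theorem NormedSpace.norm_exp_smul_sub_sum_range_le {A : Type*} [NormedRing A] [NormedAlgebra ℝ A]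
    [NormOneClass A] [CompleteSpace A] (a : A) (m : ℕ) {t : ℝ} (ht₀ : 0 ≤ t) (ht₁ : t ≤ 1) :
    ‖exp (t • a) - ∑ n ∈ range m, (t ^ n / n !) • a ^ n‖ ≤ Real.exp ‖a‖ * t ^ m := by
  have hexp : HasSum (fun n => (t ^ n / n !) • a ^ n) (exp (t • a)) := by
    convert exp_series_hasSum_exp' (𝕂 := ℝ) (t • a) using 2 with n
    rw [smul_pow, smul_smul, div_eq_inv_mul]
  have hbound : HasSum (fun n => ‖a‖ ^ (n + m) / (n + m)! * t ^ m)
      ((Real.exp ‖a‖ - ∑ n ∈ range m, ‖a‖ ^ n / n !) * t ^ m) := by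
    refine HasSum.mul_right _ ((hasSum_nat_add_iff' m).2 ?_)
    rw [Real.exp_eq_exp_ℝ]
    exact expSeries_div_hasSum_exp ‖a‖
  have hterm (n : ℕ) : ‖(t ^ (n + m) / (n + m)!) • a ^ (n + m)‖
      ≤ ‖a‖ ^ (n + m) / (n + m)! * t ^ m := by
    rw [norm_smul, Real.norm_of_nonneg (by positivity)]
    calc t ^ (n + m) / (n + m)! * ‖a ^ (n + m)‖ ≤ t ^ m / (n + m)! * ‖a‖ ^ (n + m) := by
          gcongr ?_ / _ * ?_
          · exact pow_le_pow_of_le_one ht₀ ht₁ (by omega)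
          · exact norm_pow_le a _
      _ = ‖a‖ ^ (n + m) / (n + m)! * t ^ m := by ring
  calc _ ≤ (Real.exp ‖a‖ - ∑ n ∈ range m, ‖a‖ ^ n / n !) * t ^ m :=
        ((hasSum_nat_add_iff' m).2 hexp).norm_le_of_bounded hbound hterm
    _ ≤ Real.exp ‖a‖ * t ^ m := by
        gcongr
        exact sub_le_self _ (sum_nonneg fun n _ => by positivity)

theorem Matrix.norm_apply_le_linfty_opNorm {m n α : Type*} [Fintype m] [Fintype n]
    [SeminormedAddCommGroup α] (A : Matrix m n α) (i : m) (j : n) : ‖A i j‖ ≤ ‖A‖ :=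
  (PiLp.norm_apply_le (WithLp.toLp 1 (A i)) j).trans
    (norm_le_pi_norm (fun i => WithLp.toLp 1 (A i)) i)

theorem Matrix.exists_abs_exp_smul_apply_sub_le {V : Type*} [Fintype V] [DecidableEq V]
    (M : Matrix V V ℝ) {x y : V} {k : ℕ} (hM : ∀ n < k, (M ^ n) x y = 0) :
    ∃ C : ℝ, ∀ t ∈ Set.Icc (0 : ℝ) 1,
      |exp (t • M) x y - (M ^ k) x y * t ^ k / k !| ≤ C * t ^ (k + 1) := by
  have : Nonempty V := ⟨x⟩
  refine ⟨Real.exp ‖M‖, fun t ⟨ht₀, ht₁⟩ => ?_⟩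
  have htaylor : (∑ n ∈ range (k + 1), (t ^ n / n !) • M ^ n) x y = (M ^ k) x y * t ^ k / k ! := by
    rw [Matrix.sum_apply, sum_range_succ,
      sum_eq_zero fun n hn => by simp [hM n (mem_range.1 hn)], Matrix.smul_apply, smul_eq_mul]
    ring
  calc |exp (t • M) x y - (M ^ k) x y * t ^ k / k !|
      = ‖(exp (t • M) - ∑ n ∈ range (k + 1), (t ^ n / n !) • M ^ n) x y‖ := by
        rw [Matrix.sub_apply, htaylor, Real.norm_eq_abs]
    _ ≤ ‖exp (t • M) - ∑ n ∈ range (k + 1), (t ^ n / n !) • M ^ n‖ :=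
        Matrix.norm_apply_le_linfty_opNorm _ x y
    _ ≤ Real.exp ‖M‖ * t ^ (k + 1) := norm_exp_smul_sub_sum_range_le M (k + 1) ht₀ ht₁

namespace SimpleGraph

variable {V R : Type*} [Fintype V] [DecidableEq V] (G : SimpleGraph V) [DecidableRel G.Adj]
  [Semiring R]

theorem adjMatrix_pow_apply_eq_zero_of_lt_length {n : ℕ} {x y : V}
    (h : ∀ p : G.Walk x y, n < p.length) : (G.adjMatrix R ^ n) x y = 0 := by
  rw [adjMatrix_pow_apply_eq_card_walk, Fintype.card_eq_zero_iff.2 ⟨fun ⟨p, hp⟩ => (h p).ne' hp⟩,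
    Nat.cast_zero]

theorem pow_apply_eq_adjMatrix_pow_apply_of_le_length {M : Matrix V V R}
    (hM : ∀ u v, u ≠ v → M u v = G.adjMatrix R u v) (n : ℕ) {x y : V}
    (h : ∀ p : G.Walk x y, n ≤ p.length) : (M ^ n) x y = (G.adjMatrix R ^ n) x y := by
  induction n generalizing x with
  | zero => rfl
  | succ n ih =>
    rw [pow_succ', pow_succ', Matrix.mul_apply, Matrix.mul_apply]
    refine sum_congr rfl fun z _ => ?_
    rcases eq_or_ne x z with rfl | hxz
    · have hA : (G.adjMatrix R ^ n) x y = 0 :=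
        G.adjMatrix_pow_apply_eq_zero_of_lt_length fun p => h p
      rw [ih fun p => n.le_succ.trans (h p), hA, mul_zero, mul_zero]
    · rw [hM x z hxz]
      by_cases hadj : G.Adj x z
      · rw [ih fun p => by simpa using h (p.cons hadj)]
      · simp [adjMatrix_apply, hadj]

end SimpleGraph

theorem heatKernel_small_time_asymptotics_general {V : Type*} [Fintype V] [DecidableEq V]
    (G : SimpleGraph V) [DecidableRel G.Adj]
    (L : Matrix V V ℝ)
    (hL : L = G.adjMatrix ℝ - Matrix.diagonal (fun v => (G.degree v : ℝ)))
    (x y : V) (k : ℕ) (hk : G.dist x y = k) :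
    ∃ C : ℝ, ∀ t ∈ Set.Ioc (0 : ℝ) 1,
      |(NormedSpace.exp (t • L)) x y -
        (Fintype.card {p : G.Walk x y // p.length = k} : ℝ) * t ^ k / (Nat.factorial k : ℝ)|
        ≤ C * t ^ (k + 1) := by
  have hoffdiag : ∀ u v, u ≠ v → L u v = G.adjMatrix ℝ u v := fun u v huv => by
    simp [hL, Matrix.diagonal_apply_ne _ huv]
  have hlength (p : G.Walk x y) : k ≤ p.length := hk ▸ G.dist_le p
  have hpow (n : ℕ) (hn : n ≤ k) : (L ^ n) x y = (G.adjMatrix ℝ ^ n) x y :=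
    G.pow_apply_eq_adjMatrix_pow_apply_of_le_length hoffdiag n fun p => hn.trans (hlength p)
  have hvanish (n : ℕ) (hn : n < k) : (L ^ n) x y = 0 := by
    rw [hpow n hn.le]
    exact G.adjMatrix_pow_apply_eq_zero_of_lt_length fun p => hn.trans_le (hlength p)
  have hcount : (L ^ k) x y = Fintype.card {p : G.Walk x y // p.length = k} := by
    rw [hpow k le_rfl, SimpleGraph.adjMatrix_pow_apply_eq_card_walk]
    rfl
  obtain ⟨C, hC⟩ := L.exists_abs_exp_smul_apply_sub_le hvanish
  exact ⟨C, fun t ht => hcount ▸ hC t (Set.Ioc_subset_Icc_self ht)⟩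

/-- Varadhan-type small time asymptotics: with k = d(x,y) and N the number of walks of
length k from x to y, p_t(x,y) = N t^k / k! + O(t^{k+1}) as t → 0⁺. -/
theorem heatKernel_small_time_asymptotics {V : Type*} [Fintype V] [DecidableEq V]
    (G : SimpleGraph V) [DecidableRel G.Adj]
    (L : Matrix V V ℝ)
    (hL : L = G.adjMatrix ℝ - Matrix.diagonal (fun v => (G.degree v : ℝ)))
    (x y : V) (hxy : x ≠ y) (h : G.Reachable x y)
    (k : ℕ) (hk : G.dist x y = k) :
    ∃ C : ℝ, ∀ t ∈ Set.Ioc (0 : ℝ) 1,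
      |(NormedSpace.exp (t • L)) x y -
        (Fintype.card {p : G.Walk x y // p.length = k} : ℝ) * t ^ k / (Nat.factorial k : ℝ)|
        ≤ C * t ^ (k + 1) :=
  heatKernel_small_time_asymptotics_general G L hL x y k hk
end

section
/- Let G be a finite simple bipartite graph with Kirchhoff matrix L = A − D, and let x ≠ y with d(x,y) = k finite. Then (L^{k+1})_{xy} < 0, i.e., the coefficient of t^{k+1} in the expansion of p_t(x,y) is strictly negative. -/
/-!
Write `L = A - D`. Off the diagonal `L` is supported on edges, so `(L ^ m) x y = 0` for
`m < d(x, y)`, while for `m = d(x, y)` only shortest walks contribute and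
`(L ^ m) x y = (A ^ m) x y > 0`. If `d(x, y) = m + 1`, expanding `L ^ (m + 2) = (A - D) L ^ (m + 1)`
gives `(L ^ (m + 2)) x y = ∑_{z ~ x} (L ^ (m + 1)) z y - deg x · (A ^ (m + 1)) x y`, and the
subtracted term is positive. In a bipartite graph each neighbour `z` of `x` has `d(z, y) = m` or
`m + 2`, never `m + 1`, so each summand is negative by induction on `m` or zero.
-/

open Finset Matrix

namespace SimpleGraph

variable {V : Type*} {G : SimpleGraph V}

lemma Adj.dist_le_dist_add_one {x z : V} (hadj : G.Adj x z) (y : V) :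
    G.dist x y ≤ G.dist z y + 1 := by
  have := hadj.reachable.dist_triangle_left y
  rw [dist_eq_one_iff_adj.mpr hadj] at this
  omega

lemma Colorable.dist_ne_of_adj (hG : G.Colorable 2) {x y z : V} (hadj : G.Adj x z)
    (hreach : G.Reachable x y) : G.dist x y ≠ G.dist z y := by
  obtain ⟨p, hp⟩ := hreach.exists_walk_length_eq_dist
  obtain ⟨q, hq⟩ := (hadj.reachable.symm.trans hreach).exists_walk_length_eq_dist
  have hloop := two_colorable_iff_forall_loop_even.mp hG x ((p.append q.reverse).concat hadj.symm)
  rw [Walk.length_concat, Walk.length_append, Walk.length_reverse, hp, hq] at hloop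
  intro heq
  rw [heq, ← two_mul] at hloop
  exact Nat.not_even_two_mul_add_one _ hloop

variable [Fintype V] [DecidableEq V] [DecidableRel G.Adj]

lemma adjMatrix_pow_dist_apply_pos {R : Type*} [Semiring R] [PartialOrder R] [IsOrderedRing R]
    [Nontrivial R] {x y : V} (hreach : G.Reachable x y) :
    0 < (G.adjMatrix R ^ G.dist x y) x y := by
  rw [adjMatrix_pow_apply_eq_card_walk, Nat.cast_pos, Fintype.card_pos_iff]
  obtain ⟨p, hp⟩ := hreach.exists_walk_length_eq_dist
  exact ⟨⟨p, hp⟩⟩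

section Ring

variable {R : Type*} [Ring R]

lemma adjMatrix_sub_diagonal_pow_succ_apply (d : V → R) (m : ℕ) (x y : V) :
    ((G.adjMatrix R - diagonal d) ^ (m + 1)) x y =
      ∑ z ∈ G.neighborFinset x, ((G.adjMatrix R - diagonal d) ^ m) z y
        - d x * ((G.adjMatrix R - diagonal d) ^ m) x y := by
  rw [pow_succ', sub_mul, Matrix.sub_apply, adjMatrix_mul_apply, diagonal_mul]

lemma adjMatrix_sub_diagonal_pow_apply_eq_zero_of_lt_dist (d : V → R) {m : ℕ} {x y : V}
    (hm : m < G.dist x y) : ((G.adjMatrix R - diagonal d) ^ m) x y = 0 := by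
  induction m generalizing x with
  | zero => exact one_apply_ne (fun h => by simp [h] at hm)
  | succ m ih =>
    rw [adjMatrix_sub_diagonal_pow_succ_apply, ih (by omega), mul_zero, sub_zero]
    refine sum_eq_zero fun z hz => ih ?_
    have := ((G.mem_neighborFinset x z).mp hz).dist_le_dist_add_one y
    omega

lemma adjMatrix_sub_diagonal_pow_apply_of_dist_eq (d : V → R) {m : ℕ} {x y : V}
    (hm : G.dist x y = m) :
    ((G.adjMatrix R - diagonal d) ^ m) x y = (G.adjMatrix R ^ m) x y := by
  induction m generalizing x with
  | zero => simp
  | succ m ih =>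
    rw [adjMatrix_sub_diagonal_pow_succ_apply,
      adjMatrix_sub_diagonal_pow_apply_eq_zero_of_lt_dist d (by omega), mul_zero, sub_zero,
      pow_succ', adjMatrix_mul_apply]
    refine sum_congr rfl fun z hz => ?_
    have := ((G.mem_neighborFinset x z).mp hz).dist_le_dist_add_one y
    rcases (by omega : G.dist z y = m ∨ m < G.dist z y) with h | h
    · exact ih h
    · simpa using (adjMatrix_sub_diagonal_pow_apply_eq_zero_of_lt_dist d h).trans
        (adjMatrix_sub_diagonal_pow_apply_eq_zero_of_lt_dist 0 h).symm

end Ring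

lemma adjMatrix_sub_degree_pow_dist_succ_apply_neg {R : Type*} [Ring R] [PartialOrder R]
    [IsStrictOrderedRing R] (hG : G.Colorable 2) {x y : V} (hreach : G.Reachable x y)
    (hdeg : 0 < G.degree x) :
    ((G.adjMatrix R - diagonal (fun v => (G.degree v : R))) ^ (G.dist x y + 1)) x y < 0 := by
  set L := G.adjMatrix R - diagonal (fun v => (G.degree v : R))
  induction hm : G.dist x y generalizing x with
  | zero =>
    obtain rfl := hreach.dist_eq_zero_iff.mp hm
    simpa [L] using hdeg
  | succ m ih =>
    rw [adjMatrix_sub_diagonal_pow_succ_apply, sub_neg]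
    have hdiag : 0 < (G.degree x : R) * (L ^ (m + 1)) x y := by
      refine mul_pos (Nat.cast_pos.mpr hdeg) ?_
      rw [adjMatrix_sub_diagonal_pow_apply_of_dist_eq _ hm, ← hm]
      exact adjMatrix_pow_dist_apply_pos hreach
    refine lt_of_le_of_lt (sum_nonpos fun z hz => ?_) hdiag
    have hadj := (G.mem_neighborFinset x z).mp hz
    have hlow := hadj.dist_le_dist_add_one y
    have hhigh := hadj.symm.dist_le_dist_add_one y
    have hne := hG.dist_ne_of_adj hadj hreach
    rcases (by omega : G.dist z y = m ∨ m + 1 < G.dist z y) with h | h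
    · exact (ih (hadj.symm.reachable.trans hreach) hadj.degree_pos_right h).le
    · exact (adjMatrix_sub_diagonal_pow_apply_eq_zero_of_lt_dist _ h).le

end SimpleGraph

/-- In a bipartite graph, for x ≠ y with d(x,y) = k, the coefficient (L^{k+1})_{xy}
of t^{k+1} in the heat kernel expansion is strictly negative. -/
theorem bipartite_next_coefficient_neg {V : Type*} [Fintype V] [DecidableEq V]
    (G : SimpleGraph V) [DecidableRel G.Adj] (hbip : G.Colorable 2)
    (L : Matrix V V ℝ)
    (hL : L = G.adjMatrix ℝ - Matrix.diagonal (fun v => (G.degree v : ℝ)))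
    (x y : V) (hxy : x ≠ y) (h : G.Reachable x y)
    (k : ℕ) (hk : G.dist x y = k) :
    (L ^ (k + 1)) x y < 0 := by
  subst hL hk
  exact SimpleGraph.adjMatrix_sub_degree_pow_dist_succ_apply_neg hbip h
    ((G.degree_pos_iff_mem_support x).mpr (SimpleGraph.mem_support_of_reachable hxy h))
end

section
/- Let G be a finite simple graph with Kirchhoff matrix L and x ≠ y with d(x,y) = k finite. Then lim_{t→0⁺} log p_t(x,y) / log t = d(x,y). -/
/-!
The entry `t ↦ exp (t • L) x y` is real analytic at `0`, and its `n`-th derivative there is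
`(L ^ n) x y`. Since `L` is supported on the diagonal and the edges, `(L ^ n) x y = 0` for
`n < d(x, y)`, while `(L ^ d(x, y)) x y > 0` because the off-diagonal entries of `L` are nonnegative
and positive exactly on the edges. Hence the entry has analytic order `d = d(x, y)` at `0`, i.e.
`p_t(x, y) = t ^ d * g t` with `g 0 ≠ 0`, and `log p_t(x, y) / log t = d + log (g t) / log t → d`.
-/

open Filter Topology

open Real in
theorem tendsto_log_div_log_of_analyticOrderAt_eq {f : ℝ → ℝ} {n : ℕ}
    (hf : AnalyticAt ℝ f 0) (hn : analyticOrderAt f 0 = n) :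
    Tendsto (fun t => log (f t) / log t) (𝓝[>] 0) (𝓝 n) := by
  obtain ⟨g, hg, hg0, hfg⟩ := hf.analyticOrderAt_eq_natCast.1 hn
  have hlog_g : Tendsto (fun t => log (g t) / log t) (𝓝[>] 0) (𝓝 0) :=
    ((continuousAt_log hg0).tendsto.comp (hg.continuousAt.mono_left nhdsWithin_le_nhds)).div_atBot
      tendsto_log_nhdsGT_zero
  have hlim : Tendsto (fun t => n + log (g t) / log t) (𝓝[>] 0) (𝓝 n) := by
    simpa using hlog_g.const_add (n : ℝ)
  refine hlim.congr' ?_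
  filter_upwards [nhdsWithin_le_nhds (hfg.and (hg.continuousAt.eventually_ne hg0)),
    Ioo_mem_nhdsGT (zero_lt_one' ℝ)] with t ⟨hft, hgt⟩ ⟨ht0, ht1⟩
  rw [hft, sub_zero, smul_eq_mul, log_mul (pow_ne_zero _ ht0.ne') hgt, log_pow,
    add_div, mul_div_cancel_right₀ _ (log_neg ht0 ht1).ne]

section BanachAlgebra

open NormedSpace

variable {𝕂 𝔸 E : Type*} [RCLike 𝕂] [NormedRing 𝔸] [NormedAlgebra 𝕂 𝔸] [CompleteSpace 𝔸]
  [NormedAddCommGroup E] [NormedSpace 𝕂 E]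

theorem analyticAt_comp_exp_smul (φ : 𝔸 →L[𝕂] E) (A : 𝔸) (t : 𝕂) :
    AnalyticAt 𝕂 (fun t : 𝕂 => φ (exp (t • A))) t :=
  φ.analyticAt _ |>.comp ((exp_analytic _).comp (analyticAt_id.smul analyticAt_const))

theorem iteratedDeriv_comp_exp_smul (φ : 𝔸 →L[𝕂] E) (A : 𝔸) (n : ℕ) :
    iteratedDeriv n (fun t : 𝕂 => φ (exp (t • A))) = fun t => φ (exp (t • A) * A ^ n) := by
  induction n with
  | zero => simp
  | succ n ih =>
    ext t
    rw [iteratedDeriv_succ, ih]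
    refine (φ.hasFDerivAt.comp_hasDerivAt t
      ((hasDerivAt_exp_smul_const A t).mul_const _)).deriv.trans ?_
    rw [mul_assoc, ← pow_succ']

theorem analyticOrderAt_comp_exp_smul [CompleteSpace E] (φ : 𝔸 →L[𝕂] E) (A : 𝔸) {n : ℕ}
    (h0 : ∀ k < n, φ (A ^ k) = 0) (hn : φ (A ^ n) ≠ 0) :
    analyticOrderAt (fun t : 𝕂 => φ (exp (t • A))) 0 = n := by
  rw [analyticOrderAt_eq_nat_iff_iteratedDeriv_eq_zero (analyticAt_comp_exp_smul φ A 0)]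
  simpa [iteratedDeriv_comp_exp_smul] using ⟨h0, hn⟩

end BanachAlgebra

namespace SimpleGraph

variable {V : Type*}

theorem Adj.dist_le_dist_add_one_s12 {G : SimpleGraph V} {u v : V} (h : G.Adj u v) (w : V) :
    G.dist u w ≤ G.dist v w + 1 := by
  simpa [dist_eq_one_iff_adj.2 h, add_comm] using h.reachable.dist_triangle_left w

variable (G : SimpleGraph V)

section Kirchhoff

variable [DecidableEq V] [DecidableRel G.Adj]

theorem eq_or_adj_of_adjMatrix_sub_diagonal_apply_ne_zero (d : V → ℝ) {i j : V}
    (h : (G.adjMatrix ℝ - Matrix.diagonal d) i j ≠ 0) : i = j ∨ G.Adj i j := by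
  by_contra! hij
  simp [Matrix.diagonal_apply_ne _ hij.1, hij.2] at h

theorem adjMatrix_sub_diagonal_apply_pos_of_adj (d : V → ℝ) {i j : V} (h : G.Adj i j) :
    0 < (G.adjMatrix ℝ - Matrix.diagonal d) i j := by
  simp [Matrix.diagonal_apply_ne _ h.ne, h]

end Kirchhoff

section SupportedMatrix

variable [Fintype V] [DecidableEq V] {M : Matrix V V ℝ}

theorem pow_apply_eq_zero_of_lt_dist (hM : ∀ i j, M i j ≠ 0 → i = j ∨ G.Adj i j) {n : ℕ}
    {i j : V} (h : n < G.dist i j) : (M ^ n) i j = 0 := by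
  induction n generalizing i with
  | zero =>
    have hij : i ≠ j := by rintro rfl; simp at h
    simp [hij]
  | succ n ih =>
    rw [pow_succ', Matrix.mul_apply]
    refine Finset.sum_eq_zero fun z _ => ?_
    by_cases hiz : M i z = 0
    · simp [hiz]
    rcases hM i z hiz with rfl | hadj
    · rw [ih (by omega), mul_zero]
    · rw [ih (by have := hadj.dist_le_dist_add_one_s12 j; omega), mul_zero]

theorem pow_dist_apply_pos (hM : ∀ i j, M i j ≠ 0 → i = j ∨ G.Adj i j)
    (hMadj : ∀ i j, G.Adj i j → 0 < M i j) {i j : V} (h : G.Reachable i j) :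
    0 < (M ^ G.dist i j) i j := by
  suffices H : ∀ n i, G.Reachable i j → G.dist i j = n → 0 < (M ^ n) i j from H _ i h rfl
  intro n
  induction n with
  | zero =>
    intro i hij hd
    obtain rfl : i = j := by simpa [hij] using hd
    simp
  | succ n ih =>
    intro i hij hd
    have hterm : ∀ z, 0 ≤ M i z * (M ^ n) z j := by
      intro z
      by_cases hiz : M i z = 0
      · simp [hiz]
      rcases hM i z hiz with rfl | hadj
      · rw [G.pow_apply_eq_zero_of_lt_dist hM (by omega), mul_zero]
      · rcases (show n ≤ G.dist z j by have := hadj.dist_le_dist_add_one_s12 j; omega).eq_or_lt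
          with hz | hz
        · exact (mul_pos (hMadj _ _ hadj) (ih z (hadj.reachable.symm.trans hij) hz.symm)).le
        · rw [G.pow_apply_eq_zero_of_lt_dist hM hz, mul_zero]
    obtain ⟨p, hp⟩ := hij.exists_walk_length_eq_dist
    obtain _ | @⟨_, z, _, hadj, q⟩ := p
    · simp at hd
    have hz : G.dist z j = n := by
      have := dist_le q
      have := hadj.dist_le_dist_add_one_s12 j
      simp only [Walk.length_cons] at hp
      omega
    rw [pow_succ', Matrix.mul_apply]
    exact Finset.sum_pos' (fun z _ => hterm z)
      ⟨z, Finset.mem_univ _, mul_pos (hMadj _ _ hadj) (ih z ⟨q⟩ hz)⟩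

end SupportedMatrix

end SimpleGraph

theorem heatKernel_log_limit_general {V : Type*} [Fintype V] [DecidableEq V]
    (G : SimpleGraph V) [DecidableRel G.Adj]
    (L : Matrix V V ℝ)
    (hL : L = G.adjMatrix ℝ - Matrix.diagonal (fun v => (G.degree v : ℝ)))
    (x y : V) (h : G.Reachable x y) :
    Filter.Tendsto
      (fun t : ℝ => Real.log ((NormedSpace.exp (t • L)) x y) / Real.log t)
      (nhdsWithin 0 (Set.Ioi 0)) (nhds (G.dist x y : ℝ)) := by
  -- Any Banach-algebra norm inducing the product topology gives the same `exp`.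
  let : NormedRing (Matrix V V ℝ) := Matrix.linftyOpNormedRing
  let : NormedAlgebra ℝ (Matrix V V ℝ) := Matrix.linftyOpNormedAlgebra
  have hsupp : ∀ i j, L i j ≠ 0 → i = j ∨ G.Adj i j := fun _ _ =>
    hL ▸ G.eq_or_adj_of_adjMatrix_sub_diagonal_apply_ne_zero _
  have hpos : ∀ i j, G.Adj i j → 0 < L i j := fun _ _ =>
    hL ▸ G.adjMatrix_sub_diagonal_apply_pos_of_adj _
  let entry : Matrix V V ℝ →L[ℝ] ℝ := (Matrix.entryLinearMap ℝ ℝ x y).toContinuousLinearMap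
  exact tendsto_log_div_log_of_analyticOrderAt_eq (analyticAt_comp_exp_smul entry L 0)
    (analyticOrderAt_comp_exp_smul entry L (fun _ hk => G.pow_apply_eq_zero_of_lt_dist hsupp hk)
      (G.pow_dist_apply_pos hsupp hpos h).ne')

/-- lim_{t → 0⁺} log p_t(x,y) / log t = d(x,y). -/
theorem heatKernel_log_limit {V : Type*} [Fintype V] [DecidableEq V]
    (G : SimpleGraph V) [DecidableRel G.Adj]
    (L : Matrix V V ℝ)
    (hL : L = G.adjMatrix ℝ - Matrix.diagonal (fun v => (G.degree v : ℝ)))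
    (x y : V) (hxy : x ≠ y) (h : G.Reachable x y) :
    Filter.Tendsto
      (fun t : ℝ => Real.log ((NormedSpace.exp (t • L)) x y) / Real.log t)
      (nhdsWithin 0 (Set.Ioi 0)) (nhds (G.dist x y : ℝ)) :=
  heatKernel_log_limit_general G L hL x y h
end
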